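/- If L is a finitely presented linear order, then its first Hausdorff derivative L^(1) is finitely presented. -/

import Mathlib

section HausdorffDerivative

variable {M : Type} [LinearOrder M]

/-- `x ∼₁ y` iff the closed interval between `x` and `y` is finite. -/
def sim1 (x y : M) : Prop := (Set.uIcc x y).Finite

theorem sim1_refl (x : M) : sim1 x x := by simp [sim1]

theorem sim1_symm {x y : M} (h : sim1 x y) : sim1 y x := by
  rwa [sim1, Set.uIcc_comm]

theorem sim1_trans {x y z : M} (h1 : sim1 x y) (h2 : sim1 y z) : sim1 x z :=
  Set.Finite.subset (h1.union h2) (Set.uIcc_subset_uIcc_union_uIcc)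

/-- The setoid of `∼₁`-equivalence. -/
def sim1Setoid (M : Type) [LinearOrder M] : Setoid M :=
  ⟨sim1, ⟨sim1_refl, sim1_symm, sim1_trans⟩⟩

/-- The first Hausdorff derivative `M^(1)`: the linear order of `∼₁`-classes. -/
def HDeriv (M : Type) [LinearOrder M] : Type := Quotient (sim1Setoid M)

theorem sim1_le_congr {x x' y y' : M} (hx : sim1 x x') (hy : sim1 y y')
    (h : x ≤ y ∨ sim1 x y) : x' ≤ y' ∨ sim1 x' y' := by
  by_cases hxy' : sim1 x' y'
  · exact Or.inr hxy'
  rcases h with h | h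
  · left
    by_contra hlt
    push_neg at hlt
    apply hxy' (sim1_symm _)
    have hsub : Set.uIcc y' x' ⊆ Set.uIcc y' y ∪ Set.uIcc x x' := by
      intro z hz
      rw [Set.uIcc_of_le hlt.le, Set.mem_Icc] at hz
      rcases le_or_gt z y with hzy | hzy
      · exact Or.inl (Set.mem_uIcc.2 (Or.inl ⟨hz.1, hzy⟩))
      · exact Or.inr (Set.mem_uIcc.2 (Or.inl ⟨(h.trans hzy.le), hz.2⟩))
    exact Set.Finite.subset ((sim1_symm hy).union hx) hsub
  · exact absurd (sim1_trans (sim1_trans (sim1_symm hx) h) hy) hxy'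

/-- The induced order on `∼₁`-classes. -/
def HDeriv.le : HDeriv M → HDeriv M → Prop :=
  Quotient.lift₂ (fun x y => x ≤ y ∨ sim1 x y)
    (fun _ _ _ _ ha hb => propext
      ⟨sim1_le_congr ha hb, sim1_le_congr (sim1_symm ha) (sim1_symm hb)⟩)

noncomputable instance HDeriv.instLinearOrder : LinearOrder (HDeriv M) where
  le := HDeriv.le
  le_refl := by rintro ⟨x⟩; exact Or.inl le_rfl
  le_trans := by
    rintro ⟨x⟩ ⟨y⟩ ⟨z⟩ (h1 | h1) (h2 | h2)
    · exact Or.inl (h1.trans h2)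
    · rcases le_or_gt x z with h | h
      · exact Or.inl h
      · exact Or.inr (sim1_symm (Set.Finite.subset h2
          (by rw [Set.uIcc_of_le h.le, Set.uIcc_of_ge (h.le.trans h1)]
              exact Set.Icc_subset_Icc le_rfl h1)))
    · rcases le_or_gt x z with h | h
      · exact Or.inl h
      · exact Or.inr (Set.Finite.subset h1
          (by rw [Set.uIcc_of_ge h.le, Set.uIcc_of_ge (h2.trans h.le)]
              exact Set.Icc_subset_Icc h2 le_rfl))
    · exact Or.inr (sim1_trans h1 h2)
  le_antisymm := by
    rintro ⟨x⟩ ⟨y⟩ (h1 | h1) (h2 | h2)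
    · exact Quotient.sound (le_antisymm h1 h2 ▸ sim1_refl x)
    · exact Quotient.sound (sim1_symm h2)
    · exact Quotient.sound h1
    · exact Quotient.sound h1
  le_total := by
    rintro ⟨x⟩ ⟨y⟩
    rcases le_total x y with h | h
    · exact Or.inl (Or.inl h)
    · exact Or.inr (Or.inl h)
  toDecidableLE := Classical.decRel _

end HausdorffDerivative
section IterDeriv

/-- Auxiliary: the `n`-th iterated Hausdorff derivative together with its order. -/
noncomputable def IterDerivAux (M : Type) (i : LinearOrder M) : ℕ → (T : Type) × LinearOrder T
  | 0 => ⟨M, i⟩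
  | n + 1 => ⟨@HDeriv (IterDerivAux M i n).1 (IterDerivAux M i n).2,
      @HDeriv.instLinearOrder (IterDerivAux M i n).1 (IterDerivAux M i n).2⟩

/-- The `n`-th iterated Hausdorff derivative `M^(n)`. -/
noncomputable def IterDeriv (M : Type) [i : LinearOrder M] (n : ℕ) : Type :=
  (IterDerivAux M i n).1

noncomputable instance (M : Type) [i : LinearOrder M] (n : ℕ) : LinearOrder (IterDeriv M n) :=
  (IterDerivAux M i n).2

/-- The (finite) Hausdorff rank: the least `n` such that `M^(n)` is finite. -/
noncomputable def hrank (M : Type) [LinearOrder M] : ℕ :=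
  sInf {n : ℕ | Finite (IterDeriv M n)}

end IterDeriv

/-- The class of finitely presented linear orders: the smallest
isomorphism-closed class containing `0` and `1` and closed under binary ordered
sums and the operations `L ↦ ω ×ₗ L` and `L ↦ ω* ×ₗ L`
(here `ℕ ×ₗ A = ∑_{n∈ω} A` and `ℕᵒᵈ ×ₗ A = ∑_{n∈ω*} A`). -/
inductive IsFP : (L : Type) → [_inst : LinearOrder L] → Prop where
  | zero : IsFP (Fin 0)
  | one : IsFP (Fin 1)
  | iso {A B : Type} [LinearOrder A] [LinearOrder B] :
      IsFP A → Nonempty (A ≃o B) → IsFP B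
  | sum {A B : Type} [LinearOrder A] [LinearOrder B] :
      IsFP A → IsFP B → IsFP (A ⊕ₗ B)
  | omega {A : Type} [LinearOrder A] : IsFP A → IsFP (ℕ ×ₗ A)
  | omegaStar {A : Type} [LinearOrder A] : IsFP A → IsFP (ℕᵒᵈ ×ₗ A)

/-!
Two points of `A ⊕ₗ B` in different summands are `∼₁`-equivalent exactly when the final segment
of `A` above the first and the initial segment of `B` below the second are finite; the same
criterion governs points of consecutive copies of `A` in `ℕ ×ₗ A`, and is necessary for any two
copies. Hence the classes of `A ⊕ₗ B` are those of `A` and of `B`, except that a finite last class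
of `A` merges with a finite first class of `B`: `(A ⊕ₗ B)^(1)` is `A^(1) ⊕ₗ B^(1)` or
`A^(1) ⊕ₗ (B^(1) without its least element)`. Likewise `(ℕ ×ₗ A)^(1)` is a point if `A` is
finite, `ℕ ×ₗ (A^(1) without its greatest element)` if `A` is infinite with finite first and last
classes, and `ℕ ×ₗ A^(1)` otherwise; `ℕᵒᵈ ×ₗ A` reduces to this case by duality. So the induction
goes through once finitely presented orders are known to be closed under duals and under open
final and initial segments.
-/

open Set OrderDual

section LexOrders

variable {α β γ ι : Type*} [LinearOrder α] [LinearOrder β] [LinearOrder γ] [LinearOrder ι]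

theorem Sum.Lex.strictMono_elim {f : α → γ} {g : β → γ} (hf : StrictMono f) (hg : StrictMono g)
    (hfg : ∀ a b, f a < g b) : StrictMono fun x : α ⊕ₗ β => Sum.elim f g (ofLex x) := by
  rintro (a | b) (a' | b') h
  · exact hf (Sum.Lex.inl_lt_inl_iff.mp h)
  · exact hfg a b'
  · exact absurd h Sum.Lex.not_inr_lt_inl
  · exact hg (Sum.Lex.inr_lt_inr_iff.mp h)

theorem Prod.Lex.strictMono_uncurry {f : ι → α → γ} (hf : ∀ i, StrictMono (f i))
    (hlt : ∀ i j a b, i < j → f i a < f j b) :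
    StrictMono fun x : ι ×ₗ α => f (ofLex x).1 (ofLex x).2 := by
  rintro ⟨i, a⟩ ⟨j, b⟩ h
  rcases Prod.Lex.toLex_lt_toLex.mp h with hij | ⟨rfl, hab⟩
  · exact hlt i j a b hij
  · exact hf i hab

def Sum.Lex.inlEmbedding : α ↪o α ⊕ₗ β := OrderEmbedding.ofStrictMono _ Sum.Lex.inl_strictMono

def Sum.Lex.inrEmbedding : β ↪o α ⊕ₗ β := OrderEmbedding.ofStrictMono _ Sum.Lex.inr_strictMono

def Prod.Lex.mkEmbedding (i : ι) : α ↪o ι ×ₗ α :=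
  OrderEmbedding.ofStrictMono (fun a => toLex (i, a))
    fun _ _ h => Prod.Lex.toLex_lt_toLex.mpr (Or.inr ⟨rfl, h⟩)

@[simp]
theorem Sum.Lex.inlEmbedding_apply (a : α) :
    (Sum.Lex.inlEmbedding a : α ⊕ₗ β) = toLex (Sum.inl a) := rfl

@[simp]
theorem Sum.Lex.inrEmbedding_apply (b : β) :
    (Sum.Lex.inrEmbedding b : α ⊕ₗ β) = toLex (Sum.inr b) := rfl

@[simp]
theorem Prod.Lex.mkEmbedding_apply (i : ι) (a : α) :
    Prod.Lex.mkEmbedding i a = toLex (i, a) := rfl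

theorem Sum.Lex.ordConnected_range_inlEmbedding :
    (range (Sum.Lex.inlEmbedding : α ↪o α ⊕ₗ β)).OrdConnected :=
  ⟨by
    rintro _ ⟨a, rfl⟩ _ ⟨a', rfl⟩ (c | b) ⟨-, h⟩
    · exact ⟨c, rfl⟩
    · exact absurd h Sum.Lex.not_inr_le_inl⟩

theorem Sum.Lex.ordConnected_range_inrEmbedding :
    (range (Sum.Lex.inrEmbedding : β ↪o α ⊕ₗ β)).OrdConnected :=
  ⟨by
    rintro _ ⟨b, rfl⟩ _ ⟨b', rfl⟩ (a | c) ⟨h, -⟩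
    · exact absurd h Sum.Lex.not_inr_le_inl
    · exact ⟨c, rfl⟩⟩

theorem Prod.Lex.ordConnected_range_mkEmbedding (i : ι) :
    (range (Prod.Lex.mkEmbedding i : α ↪o ι ×ₗ α)).OrdConnected :=
  ⟨by
    rintro _ ⟨a, rfl⟩ _ ⟨b, rfl⟩ ⟨j, c⟩ ⟨h₁, h₂⟩
    obtain rfl : j = i := le_antisymm (monotone_fst_ofLex h₂) (monotone_fst_ofLex h₁)
    exact ⟨c, rfl⟩⟩

variable (α β) in
def Prod.Lex.dualOrderIso : (α ×ₗ β)ᵒᵈ ≃o αᵒᵈ ×ₗ βᵒᵈ where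
  toFun p := toLex (toDual (ofLex (ofDual p)).1, toDual (ofLex (ofDual p)).2)
  invFun p := toDual (toLex (ofDual (ofLex p).1, ofDual (ofLex p).2))
  left_inv _ := rfl
  right_inv _ := rfl
  map_rel_iff' {p q} := by
    obtain ⟨a, b⟩ := p
    obtain ⟨c, d⟩ := q
    change toLex (toDual a, toDual b) ≤ toLex (toDual c, toDual d) ↔ toLex (c, d) ≤ toLex (a, b)
    simp only [Prod.Lex.toLex_le_toLex, toDual_lt_toDual, toDual_le_toDual, toDual_inj, eq_comm]

end LexOrders

section Segments

variable {α β ι : Type*} [LinearOrder α] [LinearOrder β] [LinearOrder ι]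

noncomputable def Sum.Lex.orderIsoIoiInl (a : α) :
    Ioi a ⊕ₗ β ≃o Ioi (toLex (Sum.inl a) : α ⊕ₗ β) :=
  (StrictMono.orderIso _ (Sum.Lex.strictMono_elim
    (f := fun c : Ioi a => (toLex (Sum.inl c.1) : α ⊕ₗ β)) (g := fun b => toLex (Sum.inr b))
    (fun _ _ h => Sum.Lex.inl_lt_inl_iff.mpr h) (fun _ _ h => Sum.Lex.inr_lt_inr_iff.mpr h)
    fun _ _ => Sum.Lex.inl_lt_inr _ _)).trans <| OrderIso.setCongr _ _ <| by
      ext z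
      obtain ⟨c | b, rfl⟩ := toLex.surjective z <;> simp

noncomputable def Sum.Lex.orderIsoIoiInr (b : β) :
    Ioi b ≃o Ioi (toLex (Sum.inr b) : α ⊕ₗ β) :=
  (StrictMono.orderIso (fun c : Ioi b => (toLex (Sum.inr c.1) : α ⊕ₗ β))
    fun _ _ h => Sum.Lex.inr_lt_inr_iff.mpr h).trans <| OrderIso.setCongr _ _ <| by
      ext z
      obtain ⟨c | d, rfl⟩ := toLex.surjective z <;> simp

noncomputable def Prod.Lex.orderIsoIoi (i : ι) (a : α) :
    Ioi a ⊕ₗ (Ioi i ×ₗ α) ≃o Ioi (toLex (i, a)) :=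
  (StrictMono.orderIso _ (Sum.Lex.strictMono_elim
    (f := fun c : Ioi a => toLex (i, c.1))
    (g := fun p : Ioi i ×ₗ α => toLex ((ofLex p).1.1, (ofLex p).2))
    (fun _ _ h => Prod.Lex.toLex_lt_toLex.mpr (Or.inr ⟨rfl, h⟩))
    (Prod.Lex.strictMono_uncurry (f := fun (j : Ioi i) c => toLex (j.1, c))
      (fun _ _ _ h => Prod.Lex.toLex_lt_toLex.mpr (Or.inr ⟨rfl, h⟩))
      fun _ _ _ _ h => Prod.Lex.toLex_lt_toLex.mpr (Or.inl h))
    fun _ p => Prod.Lex.toLex_lt_toLex.mpr (Or.inl (ofLex p).1.2))).trans <|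
    OrderIso.setCongr _ _ <| by
      ext z
      obtain ⟨⟨j, c⟩, rfl⟩ := toLex.surjective z
      simp [Prod.Lex.toLex_lt_toLex, or_comm]

protected noncomputable def OrderIso.Ioi (e : α ≃o β) (a : α) : Ioi a ≃o Ioi (e a) :=
  ((e.strictMono.strictMonoOn _).orderIso e (Ioi a)).trans
    (OrderIso.setCongr _ _ (e.image_Ioi a))

def OrderIso.dualIoiToDual (x : α) : (Ioi (toDual x))ᵒᵈ ≃o Iio x where
  toFun y := ⟨ofDual (ofDual y).1, (ofDual y).2⟩
  invFun y := toDual ⟨toDual y.1, y.2⟩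
  left_inv _ := rfl
  right_inv _ := rfl
  map_rel_iff' := Iff.rfl

end Segments

namespace IsFP

variable {A B : Type} [LinearOrder A] [LinearOrder B]

theorem of_orderIso (h : IsFP A) (e : A ≃o B) : IsFP B := iso h ⟨e⟩

theorem of_subsingleton [Subsingleton A] : IsFP A := by
  cases isEmpty_or_nonempty A with
  | inl _ => exact zero.of_orderIso (OrderIso.ofIsEmpty _ _)
  | inr h =>
    have := uniqueOfSubsingleton h.some
    exact one.of_orderIso (OrderIso.ofUnique _ _)

theorem dual (h : IsFP A) : IsFP Aᵒᵈ := by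
  induction h with
  | zero | one => exact of_subsingleton
  | iso _ e ih => exact ih.of_orderIso e.some.dual
  | sum _ _ ihA ihB =>
    exact (ihB.sum ihA).of_orderIso (OrderIso.sumLexDualAntidistrib _ _).symm
  | omega _ ih => exact ih.omegaStar.of_orderIso (Prod.Lex.dualOrderIso _ _).symm
  | omegaStar _ ih =>
    exact ih.omega.of_orderIso ((Prod.Lex.dualOrderIso _ _).trans
      (Prod.Lex.prodLexCongr (OrderIso.dualDual ℕ).symm (OrderIso.refl _))).symm

theorem prodLex_of_finite (h : IsFP A) (F : Type) [LinearOrder F] [Finite F] :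
    IsFP (F ×ₗ A) := by
  induction hn : Nat.card F using Nat.strong_induction_on generalizing F with
  | _ n ih =>
  cases isEmpty_or_nonempty F with
  | inl _ =>
    have : IsEmpty (F ×ₗ A) := ⟨fun p => isEmptyElim (ofLex p).1⟩
    exact of_subsingleton
  | inr _ =>
    obtain ⟨m, hm⟩ := Finite.exists_max (id : F → F)
    have : Unique (Ici m) := ⟨⟨⟨m, le_rfl⟩⟩, fun x => Subtype.ext ((hm x).antisymm x.2)⟩
    have hIio : IsFP (Iio m ×ₗ A) := ih _ (hn ▸ Finite.card_subtype_lt (lt_irrefl m)) _ rfl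
    exact (hIio.sum (h.of_orderIso (Prod.Lex.uniqueProd _ _).symm)).of_orderIso
      ((Prod.Lex.sumLexProdLexDistrib _ _ _).symm.trans
        (Prod.Lex.prodLexCongr (OrderIso.sumLexIioIci m) (OrderIso.refl A)))

theorem Ioi (h : IsFP A) (x : A) : IsFP (Set.Ioi x) := by
  induction h with
  | zero => exact x.elim0
  | one => exact of_subsingleton
  | iso _ e ih =>
    obtain ⟨e⟩ := e
    rw [← e.apply_symm_apply x]
    exact (ih _).of_orderIso (e.Ioi _)
  | sum hA hB ihA ihB =>
    obtain ⟨a | b, rfl⟩ := toLex.surjective x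
    · exact ((ihA a).sum hB).of_orderIso (Sum.Lex.orderIsoIoiInl a)
    · exact (ihB b).of_orderIso (Sum.Lex.orderIsoIoiInr b)
  | omega hA ih =>
    obtain ⟨⟨n, a⟩, rfl⟩ := toLex.surjective x
    have : Infinite (Set.Ioi n) := (Set.Ioi_infinite n).to_subtype
    exact ((ih a).sum (hA.omega.of_orderIso (Prod.Lex.prodLexCongr
      (Nat.Subtype.orderIsoOfNat _) (OrderIso.refl _)))).of_orderIso (Prod.Lex.orderIsoIoi n a)
  | omegaStar hA ih =>
    obtain ⟨⟨n, a⟩, rfl⟩ := toLex.surjective x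
    have : Finite (Set.Ioi n) := (Set.finite_Ioi n).to_subtype
    exact ((ih a).sum (hA.prodLex_of_finite _)).of_orderIso (Prod.Lex.orderIsoIoi n a)

theorem Iio (h : IsFP A) (x : A) : IsFP (Set.Iio x) :=
  (h.dual.Ioi (toDual x)).dual.of_orderIso (OrderIso.dualIoiToDual x)

end IsFP

section Sim1

variable {M N A B ι : Type} [LinearOrder M] [LinearOrder N] [LinearOrder A] [LinearOrder B]
  [LinearOrder ι]

theorem sim1_iff_finite_Icc {x y : M} (h : x ≤ y) : sim1 x y ↔ (Icc x y).Finite := by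
  rw [sim1, uIcc_of_le h]

theorem sim1_iff_of_finite_Iic {x y : M} (hx : (Iic x).Finite) : sim1 x y ↔ (Iic y).Finite := by
  refine ⟨fun h => (hx.union h).subset fun z hz => ?_,
    fun hy => (hx.union hy).subset fun z hz => ?_⟩
  · rcases le_total z x with hzx | hxz
    · exact Or.inl hzx
    · exact Or.inr (mem_uIcc.mpr (Or.inl ⟨hxz, hz⟩))
  · rcases mem_uIcc.mp hz with ⟨-, hzy⟩ | ⟨-, hzx⟩
    · exact Or.inr hzy
    · exact Or.inl hzx

theorem sim1_iff_of_finite_Ici {x y : M} (hx : (Ici x).Finite) : sim1 x y ↔ (Ici y).Finite := by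
  refine ⟨fun h => (hx.union h).subset fun z hz => ?_,
    fun hy => (hx.union hy).subset fun z hz => ?_⟩
  · rcases le_total x z with hxz | hzx
    · exact Or.inl hxz
    · exact Or.inr (mem_uIcc.mpr (Or.inr ⟨hz, hzx⟩))
  · rcases mem_uIcc.mp hz with ⟨hxz, -⟩ | ⟨hyz, -⟩
    · exact Or.inl hxz
    · exact Or.inr hyz

theorem sim1_ofDual_iff {x y : Mᵒᵈ} : sim1 (ofDual x) (ofDual y) ↔ sim1 x y := by
  rw [sim1, sim1, uIcc_ofDual]
  exact ⟨fun h => h.of_preimage toDual.surjective, fun h => h.preimage toDual.injective.injOn⟩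

theorem sim1_apply_iff (f : M ↪o N) (hf : (range f).OrdConnected) {x y : M} :
    sim1 (f x) (f y) ↔ sim1 x y := by
  have : uIcc (f x) (f y) = f '' uIcc x y := by
    rw [uIcc, uIcc, f.image_Icc hf, f.monotone.map_inf, f.monotone.map_sup]
  rw [sim1, sim1, this, finite_image_iff f.injective.injOn]

theorem sim1_inl_inr_iff {a : A} {b : B} :
    sim1 (toLex (Sum.inl a) : A ⊕ₗ B) (toLex (Sum.inr b)) ↔ (Ici a).Finite ∧ (Iic b).Finite := by
  have : Icc (toLex (Sum.inl a) : A ⊕ₗ B) (toLex (Sum.inr b)) =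
      Sum.Lex.inlEmbedding '' Ici a ∪ Sum.Lex.inrEmbedding '' Iic b := by
    ext z
    obtain ⟨c | d, rfl⟩ := toLex.surjective z <;> simp
  rw [sim1_iff_finite_Icc (Sum.Lex.inl_le_inr a b), this, finite_union,
    finite_image_iff Sum.Lex.inlEmbedding.injective.injOn,
    finite_image_iff Sum.Lex.inrEmbedding.injective.injOn]

theorem sim1_toLex_iff_of_covBy {i j : ι} (hij : i ⋖ j) {a b : A} :
    sim1 (toLex (i, a)) (toLex (j, b)) ↔ (Ici a).Finite ∧ (Iic b).Finite := by
  have : Icc (toLex (i, a)) (toLex (j, b)) =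
      Prod.Lex.mkEmbedding i '' Ici a ∪ Prod.Lex.mkEmbedding j '' Iic b := by
    ext z
    obtain ⟨⟨k, c⟩, rfl⟩ := toLex.surjective z
    have := @hij.2 k
    have := hij.lt
    simp only [mem_Icc, Prod.Lex.toLex_le_toLex, Prod.Lex.mkEmbedding_apply, mem_union, mem_image,
      mem_Ici, mem_Iic, EmbeddingLike.apply_eq_iff_eq, Prod.mk.injEq, exists_eq_right_right]
    grind
  rw [sim1_iff_finite_Icc (Prod.Lex.toLex_le_toLex.mpr (Or.inl hij.lt)), this, finite_union,
    finite_image_iff (Prod.Lex.mkEmbedding i).injective.injOn,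
    finite_image_iff (Prod.Lex.mkEmbedding j).injective.injOn]

theorem finite_Ici_Iic_of_sim1_toLex {i j : ι} (hij : i < j) {a b : A}
    (h : sim1 (toLex (i, a)) (toLex (j, b))) : (Ici a).Finite ∧ (Iic b).Finite := by
  rw [sim1_iff_finite_Icc (Prod.Lex.toLex_le_toLex.mpr (Or.inl hij))] at h
  refine ⟨(h.preimage (Prod.Lex.mkEmbedding i).injective.injOn).subset fun c hc => ?_,
    (h.preimage (Prod.Lex.mkEmbedding j).injective.injOn).subset fun c hc => ?_⟩
  · exact ⟨Prod.Lex.toLex_le_toLex.mpr (Or.inr ⟨rfl, hc⟩),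
      Prod.Lex.toLex_le_toLex.mpr (Or.inl hij)⟩
  · exact ⟨Prod.Lex.toLex_le_toLex.mpr (Or.inl hij),
      Prod.Lex.toLex_le_toLex.mpr (Or.inr ⟨rfl, hc⟩)⟩

end Sim1

namespace HDeriv

variable {M N : Type} [LinearOrder M] [LinearOrder N] {x y : M}

def mk (x : M) : HDeriv M := Quotient.mk _ x

theorem mk_surjective : Function.Surjective (mk : M → HDeriv M) := Quotient.mk_surjective

instance [Subsingleton M] : Subsingleton (HDeriv M) := inferInstanceAs (Subsingleton (Quotient _))

theorem mk_eq_mk : mk x = mk y ↔ sim1 x y := Quotient.eq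

theorem mk_le_mk : mk x ≤ mk y ↔ x ≤ y ∨ sim1 x y := Iff.rfl

theorem mk_lt_mk : mk x < mk y ↔ x < y ∧ ¬sim1 x y := by
  rw [lt_iff_le_not_ge, mk_le_mk, mk_le_mk, not_or, ← lt_iff_not_ge]
  exact ⟨fun ⟨_, hlt, hs⟩ => ⟨hlt, fun h => hs (sim1_symm h)⟩,
    fun ⟨hlt, hs⟩ => ⟨Or.inl hlt.le, hlt, fun h => hs (sim1_symm h)⟩⟩

theorem mk_lt_mk_iff_of_finite_Iic (hx : (Iic x).Finite) : mk x < mk y ↔ ¬(Iic y).Finite := by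
  rw [mk_lt_mk, sim1_iff_of_finite_Iic hx]
  exact ⟨And.right,
    fun hy => ⟨lt_of_not_ge fun hyx => hy (hx.subset (Iic_subset_Iic.mpr hyx)), hy⟩⟩

theorem mk_lt_mk_iff_of_finite_Ici (hx : (Ici x).Finite) : mk y < mk x ↔ ¬(Ici y).Finite := by
  rw [mk_lt_mk, ← sim1_iff_of_finite_Ici hx]
  exact ⟨fun h hs => h.2 (sim1_symm hs),
    fun hy => ⟨lt_of_not_ge fun hxy => hy ((sim1_iff_of_finite_Ici hx).mpr
      (hx.subset (Ici_subset_Ici.mpr hxy))), fun hs => hy (sim1_symm hs)⟩⟩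

noncomputable def map (f : M ↪o N) (hf : (range f).OrdConnected) : HDeriv M ↪o HDeriv N :=
  OrderEmbedding.ofMapLEIff (Quotient.map' f fun _ _ => (sim1_apply_iff f hf).mpr) <| by
    rintro ⟨x⟩ ⟨y⟩
    exact or_congr f.le_iff_le (sim1_apply_iff f hf)

@[simp]
theorem map_mk (f : M ↪o N) (hf : (range f).OrdConnected) (x : M) :
    map f hf (mk x) = mk (f x) := rfl

noncomputable def congr (e : M ≃o N) : HDeriv M ≃o HDeriv N :=
  RelIso.ofSurjective (map e.toOrderEmbedding (by simpa using ordConnected_univ)) fun c => by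
    obtain ⟨y, rfl⟩ := mk_surjective c
    exact ⟨mk (e.symm y), by simp⟩

variable (M) in
noncomputable def dualOrderIso : HDeriv Mᵒᵈ ≃o (HDeriv M)ᵒᵈ where
  toEquiv := (Quotient.congr ofDual fun _ _ => sim1_ofDual_iff.symm).trans toDual
  map_rel_iff' := by
    rintro ⟨x⟩ ⟨y⟩
    exact or_congr Iff.rfl (sim1_ofDual_iff.trans ⟨sim1_symm, sim1_symm⟩)

variable {A B : Type} [LinearOrder A] [LinearOrder B]

noncomputable def sumLexOrderIso (S : Set (HDeriv B))
    (hS : ∀ b, mk b ∈ S ↔ ¬((∃ a : A, (Ici a).Finite) ∧ (Iic b).Finite)) :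
    HDeriv A ⊕ₗ S ≃o HDeriv (A ⊕ₗ B) :=
  StrictMono.orderIsoOfSurjective _
    (Sum.Lex.strictMono_elim
      (map (Sum.Lex.inlEmbedding : A ↪o A ⊕ₗ B)
        Sum.Lex.ordConnected_range_inlEmbedding).strictMono
      ((map (Sum.Lex.inrEmbedding : B ↪o A ⊕ₗ B)
        Sum.Lex.ordConnected_range_inrEmbedding).strictMono.comp (Subtype.strictMono_coe _))
      fun c d => by
        obtain ⟨a, rfl⟩ := mk_surjective c
        obtain ⟨d, hb⟩ := d
        obtain ⟨b, rfl⟩ := mk_surjective d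
        refine mk_lt_mk.mpr ⟨Sum.Lex.inl_lt_inr a b, fun h => (hS b).mp hb ?_⟩
        obtain ⟨ha, hb⟩ := sim1_inl_inr_iff.mp h
        exact ⟨⟨a, ha⟩, hb⟩)
    fun c => by
      obtain ⟨x, rfl⟩ := mk_surjective c
      obtain ⟨a | b, rfl⟩ := toLex.surjective x
      · exact ⟨toLex (Sum.inl (mk a)), rfl⟩
      · by_cases hb : mk b ∈ S
        · exact ⟨toLex (Sum.inr ⟨mk b, hb⟩), rfl⟩
        · obtain ⟨⟨a, ha⟩, hb⟩ := not_not.mp ((hS b).not.mp hb)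
          exact ⟨toLex (Sum.inl (mk a)), mk_eq_mk.mpr (sim1_inl_inr_iff.mpr ⟨ha, hb⟩)⟩

noncomputable def natLexOrderIso [Infinite A] (S : Set (HDeriv A))
    (hS : ∀ a, mk a ∈ S ↔ ¬((Ici a).Finite ∧ ∃ b : A, (Iic b).Finite)) :
    ℕ ×ₗ S ≃o HDeriv (ℕ ×ₗ A) :=
  StrictMono.orderIsoOfSurjective _
    (Prod.Lex.strictMono_uncurry
      (f := fun n (d : S) => map (Prod.Lex.mkEmbedding n : A ↪o ℕ ×ₗ A)
        (Prod.Lex.ordConnected_range_mkEmbedding n) d.1)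
      (fun n => (map _ _).strictMono.comp (Subtype.strictMono_coe _))
      fun m n c d hmn => by
        obtain ⟨c, ha⟩ := c
        obtain ⟨d, -⟩ := d
        obtain ⟨a, rfl⟩ := mk_surjective c
        obtain ⟨b, rfl⟩ := mk_surjective d
        refine mk_lt_mk.mpr ⟨Prod.Lex.toLex_lt_toLex.mpr (Or.inl hmn), fun h => (hS a).mp ha ?_⟩
        obtain ⟨ha, hb⟩ := finite_Ici_Iic_of_sim1_toLex hmn h
        exact ⟨ha, b, hb⟩)
    fun c => by
      obtain ⟨x, rfl⟩ := mk_surjective c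
      obtain ⟨⟨n, a⟩, rfl⟩ := toLex.surjective x
      by_cases ha : mk a ∈ S
      · exact ⟨toLex (n, ⟨mk a, ha⟩), rfl⟩
      · obtain ⟨ha, b, hb⟩ := not_not.mp ((hS a).not.mp ha)
        have hbS : mk b ∈ S := (hS b).mpr fun ⟨hb', _⟩ =>
          infinite_univ ((hb.union hb').subset fun z _ => le_total z b)
        exact ⟨toLex (n + 1, ⟨mk b, hbS⟩), mk_eq_mk.mpr
          (sim1_symm ((sim1_toLex_iff_of_covBy (Order.covBy_add_one n)).mpr ⟨ha, hb⟩))⟩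

theorem subsingleton_natLex [Finite A] : Subsingleton (HDeriv (ℕ ×ₗ A)) := by
  have h₀ : ∀ n a b, sim1 (toLex (0, a) : ℕ ×ₗ A) (toLex (n, b)) := by
    intro n
    induction n with
    | zero =>
      exact fun a b => (sim1_apply_iff (Prod.Lex.mkEmbedding 0 : A ↪o ℕ ×ₗ A)
        (Prod.Lex.ordConnected_range_mkEmbedding 0) (x := a) (y := b)).mpr (toFinite _)
    | succ n ih =>
      exact fun a b => sim1_trans (ih a b)
        ((sim1_toLex_iff_of_covBy (Order.covBy_add_one n)).mpr ⟨toFinite _, toFinite _⟩)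
  refine ⟨fun c d => ?_⟩
  obtain ⟨⟨m, a⟩, rfl⟩ := mk_surjective c
  obtain ⟨⟨n, b⟩, rfl⟩ := mk_surjective d
  exact mk_eq_mk.mpr (sim1_trans (sim1_symm (h₀ m a a)) (h₀ n a b))

end HDeriv

namespace IsFP

variable {A B : Type} [LinearOrder A] [LinearOrder B]

theorem hDeriv_sumLex (hA : IsFP (HDeriv A)) (hB : IsFP (HDeriv B)) :
    IsFP (HDeriv (A ⊕ₗ B)) := by
  by_cases h : (∃ a : A, (Ici a).Finite) ∧ ∃ b : B, (Iic b).Finite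
  · obtain ⟨ha, b₀, hb₀⟩ := h
    refine (hA.sum (hB.Ioi (HDeriv.mk b₀))).of_orderIso (HDeriv.sumLexOrderIso _ fun b => ?_)
    rw [mem_Ioi, HDeriv.mk_lt_mk_iff_of_finite_Iic hb₀]
    tauto
  · refine (hA.sum (hB.of_orderIso OrderIso.Set.univ.symm)).of_orderIso
      (HDeriv.sumLexOrderIso univ fun b => ?_)
    exact iff_of_true (mem_univ _) fun ⟨ha, hb⟩ => h ⟨ha, b, hb⟩

theorem hDeriv_natLex (hA : IsFP (HDeriv A)) : IsFP (HDeriv (ℕ ×ₗ A)) := by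
  cases finite_or_infinite A with
  | inl _ =>
    have := HDeriv.subsingleton_natLex (A := A)
    exact of_subsingleton
  | inr _ =>
    by_cases h : (∃ a : A, (Ici a).Finite) ∧ ∃ b : A, (Iic b).Finite
    · obtain ⟨⟨a₀, ha₀⟩, hb⟩ := h
      refine (hA.Iio (HDeriv.mk a₀)).omega.of_orderIso (HDeriv.natLexOrderIso _ fun a => ?_)
      rw [mem_Iio, HDeriv.mk_lt_mk_iff_of_finite_Ici ha₀]
      tauto
    · refine (hA.of_orderIso OrderIso.Set.univ.symm).omega.of_orderIso
        (HDeriv.natLexOrderIso univ fun a => ?_)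
      exact iff_of_true (mem_univ _) fun ⟨ha, hb⟩ => h ⟨⟨a, ha⟩, hb⟩

theorem hDeriv_natDualLex (hA : IsFP (HDeriv A)) : IsFP (HDeriv (ℕᵒᵈ ×ₗ A)) :=
  (hA.dual.of_orderIso (HDeriv.dualOrderIso A).symm).hDeriv_natLex.dual.of_orderIso
    ((HDeriv.dualOrderIso _).symm.trans (HDeriv.congr ((Prod.Lex.dualOrderIso _ _).trans
      (Prod.Lex.prodLexCongr (OrderIso.refl _) (OrderIso.dualDual A).symm))))

end IsFP

/-- The first Hausdorff derivative of a finitely presented linear order is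
finitely presented. -/
theorem stmt_15 (L : Type) [LinearOrder L] (h : IsFP L) : IsFP (HDeriv L) := by
  induction h with
  | zero | one => exact .of_subsingleton
  | iso _ e ih => exact ih.of_orderIso (HDeriv.congr e.some)
  | sum _ _ ihA ihB => exact ihA.hDeriv_sumLex ihB
  | omega _ ih => exact ih.hDeriv_natLex
  | omegaStar _ ih => exact ih.hDeriv_natDualLex
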